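/- arXiv:1412.3681 — 8 statements merged into one kernel-verified Lean document; each statement's English description precedes it below -/
import Mathlib

section
/- Let (F_n)_{n∈ℕ} be a sequence of Möbius functions F_n(V) = (a_n V + b_n)/(c_n V + d_n) with complex coefficients satisfying a_n d_n − b_n c_n ≠ 0, such that for every V ∈ ℝ the denominator c_n V + d_n is nonzero, Im F_n(V) ≥ 0, and the sequence (Im F_n(V))_{n∈ℕ} converges to a limit in [0, ∞] (the value +∞ being allowed). Then the limit lim_{n→∞} Im F_n(V) is finite or infinite simultaneously for all except at most one value of V ∈ ℝ; that is, either the set {V ∈ ℝ : lim_{n→∞} Im F_n(V) = ∞} has at most one element, or the set {V ∈ ℝ : lim_{n→∞} Im F_n(V) < ∞} has at most one element. -/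
/-!
Writing `pₙ(V) = |cₙV + dₙ|²`, the function `qₙ(V) = Im Fₙ(V) · pₙ(V) = Im((aₙV + bₙ)(cₙV + dₙ)‾)`
is, like `pₙ`, a nonnegative real quadratic polynomial. The values of a nonnegative quadratic
anywhere are bounded by its values at two distinct points `w ≠ w'`, up to a factor depending only
on the points. Hence if `Im Fₙ ≤ M` at `w` and `w'`, then for any `v ≠ v'` we get
`qₙ(v) + qₙ(v') ≤ K M (pₙ(v) + pₙ(v'))`, so `Im Fₙ` cannot tend to `∞` at both `v` and `v'`.
-/

open Filter Topology ComplexConjugate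
open scoped ENNReal

def IsQuadraticFun (f : ℝ → ℝ) : Prop :=
  ∃ A B C : ℝ, f = fun s => A * s ^ 2 + B * s + C

theorem leading_coeff_nonneg_of_forall_nonneg {A B C : ℝ}
    (h : ∀ s, 0 ≤ A * s ^ 2 + B * s + C) : 0 ≤ A := by
  have hd := discrim_le_zero (K := ℝ) (a := A) (b := B) (c := C) fun s => by
    simpa [sq] using h s
  unfold discrim at hd
  nlinarith [h 0, h 1, h (-1)]

theorem exists_le_mul_add_of_isQuadraticFun {u v : ℝ} (huv : u ≠ v) (t : ℝ) :
    ∃ K, 0 ≤ K ∧ ∀ f, IsQuadraticFun f → (∀ s, 0 ≤ f s) → f t ≤ K * (f u + f v) := by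
  set l := (t - v) / (u - v)
  set m := (u - t) / (u - v)
  refine ⟨|l| + |m| + 2 * |l * m|, by positivity, ?_⟩
  rintro f ⟨A, B, C, rfl⟩ hf
  have hA : 0 ≤ A := leading_coeff_nonneg_of_forall_nonneg hf
  have hu := hf u
  have hv := hf v
  have hmid := hf ((u + v) / 2)
  simp only at hu hv hmid ⊢
  -- Interpolation through `u` and `v`; the curvature term is controlled by `f ((u + v) / 2) ≥ 0`.
  have hinterp : A * t ^ 2 + B * t + C =
      l * (A * u ^ 2 + B * u + C) + m * (A * v ^ 2 + B * v + C) - l * m * (A * (u - v) ^ 2) := by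
    have : u - v ≠ 0 := sub_ne_zero.mpr huv
    simp only [l, m]; field_simp; ring
  have hcurv : A * (u - v) ^ 2 ≤ 2 * ((A * u ^ 2 + B * u + C) + (A * v ^ 2 + B * v + C)) := by
    nlinarith
  have hD : 0 ≤ A * (u - v) ^ 2 := by positivity
  rw [hinterp]
  nlinarith [mul_nonneg (sub_nonneg.2 (le_abs_self l)) hu, mul_nonneg (abs_nonneg l) hv,
    mul_nonneg (sub_nonneg.2 (le_abs_self m)) hv, mul_nonneg (abs_nonneg m) hu,
    mul_nonneg (neg_le_iff_add_nonneg.1 (neg_abs_le (l * m))) hD,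
    mul_nonneg (abs_nonneg (l * m)) (sub_nonneg.2 hcurv)]

theorem im_div_mul_normSq {z w : ℂ} (hw : w ≠ 0) :
    (z / w).im * Complex.normSq w = (z * conj w).im := by
  rw [Complex.div_im]
  have : Complex.normSq w ≠ 0 := Complex.normSq_eq_zero.not.mpr hw
  field_simp
  simp [Complex.mul_im]
  ring

theorem isQuadraticFun_im_mul_conj (a b c d : ℂ) :
    IsQuadraticFun fun s : ℝ => ((a * s + b) * conj (c * s + d)).im :=
  ⟨(a * conj c).im, (a * conj d + b * conj c).im, (b * conj d).im, by
    ext s; simp [Complex.mul_im, Complex.mul_re]; ring⟩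

theorem isQuadraticFun_normSq (c d : ℂ) :
    IsQuadraticFun fun s : ℝ => Complex.normSq (c * s + d) :=
  ⟨Complex.normSq c, 2 * (c * conj d).re, Complex.normSq d, by
    ext s; simp [Complex.normSq_apply, Complex.mul_im, Complex.mul_re]; ring⟩

theorem exists_add_le_of_le_mul_at_two_points {u v w w' : ℝ} (huv : u ≠ v) (hww' : w ≠ w') :
    ∃ K, 0 ≤ K ∧ ∀ p q : ℝ → ℝ, IsQuadraticFun p → IsQuadraticFun q →
      (∀ s, 0 ≤ p s) → (∀ s, 0 ≤ q s) → ∀ M, 0 ≤ M →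
      q w ≤ M * p w → q w' ≤ M * p w' → q u + q v ≤ K * M * (p u + p v) := by
  obtain ⟨Ku, hKu, hqu⟩ := exists_le_mul_add_of_isQuadraticFun hww' u
  obtain ⟨Kv, hKv, hqv⟩ := exists_le_mul_add_of_isQuadraticFun hww' v
  obtain ⟨Jw, hJw, hpw⟩ := exists_le_mul_add_of_isQuadraticFun huv w
  obtain ⟨Jw', hJw', hpw'⟩ := exists_le_mul_add_of_isQuadraticFun huv w'
  refine ⟨(Ku + Kv) * (Jw + Jw'), by positivity, ?_⟩
  intro p q hp hq hp0 hq0 M hM hw hw'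
  calc q u + q v ≤ (Ku + Kv) * (q w + q w') := by
        nlinarith [hqu q hq hq0, hqv q hq hq0, hq0 w, hq0 w']
    _ ≤ (Ku + Kv) * (M * (p w + p w')) := by gcongr; linarith
    _ ≤ (Ku + Kv) * (M * ((Jw + Jw') * (p u + p v))) := by
        gcongr; linarith [hpw p hp hp0, hpw' p hp hp0]
    _ = (Ku + Kv) * (Jw + Jw') * M * (p u + p v) := by ring

theorem exists_eventually_le_of_tendsto_ofReal {f : ℕ → ℝ} {L : ℝ≥0∞} (hL : L ≠ ⊤)
    (hf : ∀ n, 0 ≤ f n) (h : Tendsto (fun n => ENNReal.ofReal (f n)) atTop (𝓝 L)) :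
    ∃ M, ∀ᶠ n in atTop, f n ≤ M := by
  have : Tendsto f atTop (𝓝 L.toReal) :=
    ((ENNReal.tendsto_toReal hL).comp h).congr fun n => ENNReal.toReal_ofReal (hf n)
  exact this.isBoundedUnder_le

theorem eventually_gt_of_tendsto_ofReal_top {f : ℕ → ℝ}
    (h : Tendsto (fun n => ENNReal.ofReal (f n)) atTop (𝓝 ⊤)) (M : ℝ) :
    ∀ᶠ n in atTop, M < f n := by
  filter_upwards [h.eventually (lt_mem_nhds ENNReal.ofReal_lt_top)] with n hn
  exact (ENNReal.ofReal_lt_ofReal_iff'.mp hn).1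

theorem stmt0_general (a b c d : ℕ → ℂ)
    (F : ℕ → ℝ → ℂ)
    (hF : ∀ n (V : ℝ), F n V = (a n * (V : ℂ) + b n) / (c n * (V : ℂ) + d n))
    (hden : ∀ n (V : ℝ), c n * (V : ℂ) + d n ≠ 0)
    (him : ∀ n (V : ℝ), 0 ≤ (F n V).im) :
    {V : ℝ | Tendsto (fun n => ENNReal.ofReal ((F n V).im)) atTop (𝓝 ⊤)}.Subsingleton ∨
    {V : ℝ | ∃ L : ℝ≥0∞, L ≠ ⊤ ∧
      Tendsto (fun n => ENNReal.ofReal ((F n V).im)) atTop (𝓝 L)}.Subsingleton := by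
  by_contra hcon
  rw [not_or, Set.not_subsingleton_iff, Set.not_subsingleton_iff] at hcon
  obtain ⟨⟨V, hV, V', hV', hVV'⟩, ⟨W, ⟨L, hL, hWL⟩, W', ⟨L', hL', hWL'⟩, hWW'⟩⟩ := hcon
  set p : ℕ → ℝ → ℝ := fun n s => Complex.normSq (c n * s + d n)
  set q : ℕ → ℝ → ℝ := fun n s => ((a n * s + b n) * conj (c n * s + d n)).im
  have hp : ∀ n s, 0 < p n s := fun n s => Complex.normSq_pos.2 (hden n s)
  have hq : ∀ n s, q n s = (F n s).im * p n s := fun n s => by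
    rw [hF, im_div_mul_normSq (hden n s)]
  obtain ⟨K, hK, hcmp⟩ := exists_add_le_of_le_mul_at_two_points hVV' hWW'
  obtain ⟨M, hM⟩ := exists_eventually_le_of_tendsto_ofReal hL (him · W) hWL
  obtain ⟨M', hM'⟩ := exists_eventually_le_of_tendsto_ofReal hL' (him · W') hWL'
  set N := max M M'
  obtain ⟨n, ⟨hnW, hnW'⟩, hnV, hnV'⟩ := ((hM.and hM').and
    ((eventually_gt_of_tendsto_ofReal_top hV (K * N)).and
      (eventually_gt_of_tendsto_ofReal_top hV' (K * N)))).exists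
  have hbound : ∀ s, (F n s).im ≤ N → q n s ≤ N * p n s := fun s hs => by
    rw [hq]; exact mul_le_mul_of_nonneg_right hs (hp n s).le
  have hsum := hcmp (p n) (q n) (isQuadraticFun_normSq _ _) (isQuadraticFun_im_mul_conj _ _ _ _)
    (fun s => (hp n s).le) (fun s => hq n s ▸ mul_nonneg (him n s) (hp n s).le) N
    ((him n W).trans (hnW.trans (le_max_left _ _)))
    (hbound W (hnW.trans (le_max_left _ _))) (hbound W' (hnW'.trans (le_max_right _ _)))
  have hV1 := mul_lt_mul_of_pos_right hnV (hp n V)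
  have hV2 := mul_lt_mul_of_pos_right hnV' (hp n V')
  rw [← hq] at hV1 hV2
  linarith

/-- For a sequence of Möbius functions `Fₙ(V) = (aₙV+bₙ)/(cₙV+dₙ)` with
nonvanishing determinant, real-nonvanishing denominators, nonnegative imaginary parts on ℝ,
and convergent imaginary parts (in `[0,∞]`), the limit is finite or infinite simultaneously
for all but at most one real `V`. -/
theorem stmt0 (a b c d : ℕ → ℂ)
    (hdet : ∀ n, a n * d n - b n * c n ≠ 0)
    (F : ℕ → ℝ → ℂ)
    (hF : ∀ n (V : ℝ), F n V = (a n * (V : ℂ) + b n) / (c n * (V : ℂ) + d n))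
    (hden : ∀ n (V : ℝ), c n * (V : ℂ) + d n ≠ 0)
    (him : ∀ n (V : ℝ), 0 ≤ (F n V).im)
    (hconv : ∀ V : ℝ, ∃ L : ℝ≥0∞,
      Tendsto (fun n => ENNReal.ofReal ((F n V).im)) atTop (𝓝 L)) :
    {V : ℝ | Tendsto (fun n => ENNReal.ofReal ((F n V).im)) atTop (𝓝 ⊤)}.Subsingleton ∨
    {V : ℝ | ∃ L : ℝ≥0∞, L ≠ ⊤ ∧
      Tendsto (fun n => ENNReal.ofReal ((F n V).im)) atTop (𝓝 L)}.Subsingleton :=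
  stmt0_general a b c d F hF hden him
end

section
/- Let G be a countable set, A a bounded self-adjoint operator on ℓ²(G), x ≠ y two distinct points of G, and z ∈ ℂ with Im z ≠ 0. Then there exist unique complex numbers α, β, τ₁, τ₂ (depending only on A, x, y, z and not on u, v) such that for all u, v ∈ ℝ, writing H_{u,v} = A + u P_x + v P_y with P_x, P_y the orthogonal projections onto ℂδ_x, ℂδ_y, the 2×2 matrix M(u,v) = [[u − α, −τ₁], [−τ₂, v − β]] is invertible and its inverse equals the matrix of Green function entries [[⟨δ_x,(H_{u,v}−z)⁻¹δ_x⟩, ⟨δ_x,(H_{u,v}−z)⁻¹δ_y⟩], [⟨δ_y,(H_{u,v}−z)⁻¹δ_x⟩, ⟨δ_y,(H_{u,v}−z)⁻¹δ_y⟩]]. -/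
/-!
Write `R₀ = (A - z)⁻¹`, `R = (A + V - z)⁻¹` with `V = u Pₓ + v P_y`, and let `N₀`, `N` be the
matrices of `R₀`, `R` compressed to `δₓ, δ_y`. Since `V` is a diagonal combination of the
projections onto `δₓ, δ_y`, compressing the second resolvent identity `R₀ - R = R₀ V R` gives
`N₀ - N = N₀ diag(u, v) N`, that is `(diag(u, v) + N₀⁻¹) N = 1`; so `(α, β, τ₁, τ₂)` is read off
from `-N₀⁻¹`, independently of `u, v`. The matrix `N₀` is invertible because `⟪ψ, R₀ ψ⟫ = 0`
forces `ψ = 0` when `Im z ≠ 0`. Uniqueness holds because a left inverse of `N` at `u = v = 0`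
equals any right inverse.
-/

open scoped InnerProductSpace

theorem IsSelfAdjoint.isUnit_sub_smul_one {A : Type*} [CStarAlgebra A] {a : A}
    (ha : IsSelfAdjoint a) {z : ℂ} (hz : z.im ≠ 0) : IsUnit (a - z • 1) := by
  have hz : z ∉ spectrum ℂ a := fun h => hz (ha.im_eq_zero_of_mem_spectrum h)
  rw [spectrum.notMem_iff, Algebra.algebraMap_eq_smul_one] at hz
  simpa using hz.neg

theorem lp.orthonormal_single {𝕜 ι : Type*} [RCLike 𝕜] [DecidableEq ι] :
    Orthonormal 𝕜 (fun i : ι => lp.single 2 i (1 : 𝕜)) := by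
  rw [orthonormal_iff_ite]
  intro i j
  rw [lp.inner_single_left, lp.single_apply, Pi.single_apply]
  split_ifs <;> simp

section

variable {E : Type*} [NormedAddCommGroup E] [InnerProductSpace ℂ E]

theorem IsSelfAdjoint.eq_zero_of_inner_inverse_sub_smul_one_self [CompleteSpace E]
    {H : E →L[ℂ] E} (hH : IsSelfAdjoint H) {z : ℂ} (hz : z.im ≠ 0) {ψ : E}
    (hψ : ⟪ψ, Ring.inverse (H - z • 1) ψ⟫_ℂ = 0) : ψ = 0 := by
  set φ := Ring.inverse (H - z • 1) ψ
  have hψφ : (H - z • 1) φ = ψ := by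
    rw [← mul_apply_eq_comp, Ring.mul_inverse_cancel _ (hH.isUnit_sub_smul_one hz),
      one_apply_eq_self]
  -- `Im ⟪(H - z) φ, φ⟫ = Im z ‖φ‖²` since `⟪H φ, φ⟫` is real.
  have hnorm : z.im * ‖φ‖ ^ 2 = 0 := by
    have h := congrArg Complex.im (hψφ ▸ hψ : ⟪(H - z • 1) φ, φ⟫_ℂ = 0)
    have hHφ : (⟪H φ, φ⟫_ℂ).im = 0 :=
      (ContinuousLinearMap.isSelfAdjoint_iff_isSymmetric.1 hH).im_inner_apply_self φ
    have hre : (⟪φ, φ⟫_ℂ).re = ‖φ‖ ^ 2 := by simpa using inner_self_eq_norm_sq (𝕜 := ℂ) φ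
    have him : (⟪φ, φ⟫_ℂ).im = 0 := by simpa using inner_self_im (𝕜 := ℂ) φ
    simp only [sub_apply, smul_apply, one_apply_eq_self, inner_sub_left, inner_smul_left,
      Complex.sub_im, Complex.mul_im, Complex.conj_re, Complex.conj_im, Complex.zero_im, hHφ,
      hre, him] at h
    linarith
  have hφ : φ = 0 := by simpa [hz] using hnorm
  rw [← hψφ, hφ, map_zero]

variable {ι : Type*} [Fintype ι]

noncomputable def compressionMatrix (T : E →L[ℂ] E) (e : ι → E) : Matrix ι ι ℂ :=
  Matrix.of fun i j => ⟪e i, T (e j)⟫_ℂ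

omit [Fintype ι] in
@[simp]
theorem compressionMatrix_apply (T : E →L[ℂ] E) (e : ι → E) (i j : ι) :
    compressionMatrix T e i j = ⟪e i, T (e j)⟫_ℂ :=
  rfl

omit [Fintype ι] in
theorem compressionMatrix_sub (S T : E →L[ℂ] E) (e : ι → E) :
    compressionMatrix (S - T) e = compressionMatrix S e - compressionMatrix T e := by
  ext i j
  simp

theorem compressionMatrix_mul_mul_of_apply_eq_sum [DecidableEq ι] {V : E →L[ℂ] E} {e : ι → E}
    {d : ι → ℂ} (hV : ∀ ψ, V ψ = ∑ i, (d i * ⟪e i, ψ⟫_ℂ) • e i) (S T : E →L[ℂ] E) :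
    compressionMatrix (S * V * T) e =
      compressionMatrix S e * Matrix.diagonal d * compressionMatrix T e := by
  ext i j
  rw [Matrix.mul_apply]
  simp [Matrix.mul_diagonal, hV, mul_comm, mul_left_comm, mul_assoc]

theorem isSelfAdjoint_of_apply_eq_sum [CompleteSpace E] {V : E →L[ℂ] E} {e : ι → E} {d : ι → ℝ}
    (hV : ∀ ψ, V ψ = ∑ i, ((d i : ℂ) * ⟪e i, ψ⟫_ℂ) • e i) : IsSelfAdjoint V := by
  rw [ContinuousLinearMap.isSelfAdjoint_iff_isSymmetric]
  intro ψ φ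
  simp [hV, inner_sum, sum_inner, inner_smul_left, inner_smul_right, mul_comm, mul_left_comm,
    mul_assoc]

theorem IsSelfAdjoint.det_compressionMatrix_inverse_sub_smul_one_ne_zero [CompleteSpace E]
    [DecidableEq ι] {H : E →L[ℂ] E} (hH : IsSelfAdjoint H) {z : ℂ} (hz : z.im ≠ 0) {e : ι → E}
    (he : LinearIndependent ℂ e) : (compressionMatrix (Ring.inverse (H - z • 1)) e).det ≠ 0 := by
  intro hdet
  obtain ⟨ξ, hξ, hNξ⟩ := Matrix.exists_mulVec_eq_zero_iff.2 hdet
  obtain ⟨ψ, hψ⟩ : ∃ ψ, ψ = ∑ j, ξ j • e j := ⟨_, rfl⟩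
  have he_ψ (i : ι) : ⟪e i, Ring.inverse (H - z • 1) ψ⟫_ℂ = 0 := calc
    _ = (compressionMatrix (Ring.inverse (H - z • 1)) e).mulVec ξ i := by
      simp [hψ, Matrix.mulVec, dotProduct, mul_comm]
    _ = 0 := congrFun hNξ i
  have hψ0 : ψ = 0 := by
    refine hH.eq_zero_of_inner_inverse_sub_smul_one_self hz ?_
    nth_rewrite 1 [hψ]
    simp [he_ψ]
  exact hξ (funext (Fintype.linearIndependent_iff.1 he ξ (hψ ▸ hψ0)))

theorem IsSelfAdjoint.diagonal_add_inv_compressionMatrix_mul_compressionMatrix_inverse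
    [CompleteSpace E] [DecidableEq ι] {H V : E →L[ℂ] E} (hH : IsSelfAdjoint H) {z : ℂ}
    (hz : z.im ≠ 0) {e : ι → E} (he : LinearIndependent ℂ e) {d : ι → ℝ}
    (hV : ∀ ψ, V ψ = ∑ i, ((d i : ℂ) * ⟪e i, ψ⟫_ℂ) • e i) :
    (Matrix.diagonal (fun i => (d i : ℂ)) + (compressionMatrix (Ring.inverse (H - z • 1)) e)⁻¹) *
      compressionMatrix (Ring.inverse (H + V - z • 1)) e = 1 := by
  set N₀ := compressionMatrix (Ring.inverse (H - z • 1)) e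
  set N := compressionMatrix (Ring.inverse (H + V - z • 1)) e
  have hHV : IsSelfAdjoint (H + V) := hH.add (isSelfAdjoint_of_apply_eq_sum hV)
  have hresolvent : Ring.inverse (H - z • 1) - Ring.inverse (H + V - z • 1) =
      Ring.inverse (H - z • 1) * V * Ring.inverse (H + V - z • 1) := by
    rw [Ring.inverse_sub_inverse (iff_of_true (hH.isUnit_sub_smul_one hz)
      (hHV.isUnit_sub_smul_one hz)), add_sub_right_comm, add_sub_cancel_left]
  have hN : N₀ - N = N₀ * Matrix.diagonal (fun i => (d i : ℂ)) * N := by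
    rw [← compressionMatrix_sub, hresolvent, compressionMatrix_mul_mul_of_apply_eq_sum hV]
  have hN₀ : IsUnit N₀.det :=
    (hH.det_compressionMatrix_inverse_sub_smul_one_ne_zero hz he).isUnit
  have hdiag : Matrix.diagonal (fun i => (d i : ℂ)) * N = 1 - N₀⁻¹ * N := by
    rw [← Matrix.nonsing_inv_mul _ hN₀, ← Matrix.mul_sub, hN, ← Matrix.mul_assoc,
      ← Matrix.mul_assoc, Matrix.nonsing_inv_mul _ hN₀, Matrix.one_mul]
  rw [Matrix.add_mul, hdiag, sub_add_cancel]

end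

theorem stmt4_general {G : Type*} [DecidableEq G]
    (A : lp (fun _ : G => ℂ) 2 →L[ℂ] lp (fun _ : G => ℂ) 2) (hA : IsSelfAdjoint A)
    (x y : G) (hxy : x ≠ y) (z : ℂ) (hz : z.im ≠ 0)
    (Px Py : lp (fun _ : G => ℂ) 2 →L[ℂ] lp (fun _ : G => ℂ) 2)
    (hPx : ∀ ψ, Px ψ = (inner ℂ (lp.single 2 x (1:ℂ)) ψ : ℂ) • lp.single 2 x (1:ℂ))
    (hPy : ∀ ψ, Py ψ = (inner ℂ (lp.single 2 y (1:ℂ)) ψ : ℂ) • lp.single 2 y (1:ℂ))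
    (Gf : ℝ → ℝ → G → G → ℂ)
    (hGf : ∀ (u v : ℝ) (w w' : G), Gf u v w w' =
      (inner ℂ (lp.single 2 w (1:ℂ))
        (Ring.inverse (A + (u : ℂ) • Px + (v : ℂ) • Py - z • 1) (lp.single 2 w' (1:ℂ))) : ℂ)) :
    ∃! p : ℂ × ℂ × ℂ × ℂ, ∀ u v : ℝ,
      !![(u : ℂ) - p.1, -p.2.2.1; -p.2.2.2, (v : ℂ) - p.2.1] *
          !![Gf u v x x, Gf u v x y; Gf u v y x, Gf u v y y] = 1 ∧
      !![Gf u v x x, Gf u v x y; Gf u v y x, Gf u v y y] *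
          !![(u : ℂ) - p.1, -p.2.2.1; -p.2.2.2, (v : ℂ) - p.2.1] = 1 := by
  set e : Fin 2 → lp (fun _ : G => ℂ) 2 := fun i => lp.single 2 (![x, y] i) 1
  have he : Orthonormal ℂ e := by
    refine lp.orthonormal_single.comp _ fun i j hij => ?_
    fin_cases i <;> fin_cases j <;> simp_all [eq_comm]
  have hV (u v : ℝ) (ψ) : ((u : ℂ) • Px + (v : ℂ) • Py) ψ =
      ∑ i, ((![u, v] i : ℂ) * ⟪e i, ψ⟫_ℂ) • e i := by
    rw [add_apply, smul_apply, smul_apply, hPx, hPy]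
    simp [e, Fin.sum_univ_two, smul_smul]
  have hGreen (u v : ℝ) : !![Gf u v x x, Gf u v x y; Gf u v y x, Gf u v y y] =
      compressionMatrix (Ring.inverse (A + ((u : ℂ) • Px + (v : ℂ) • Py) - z • 1)) e := by
    ext i j
    fin_cases i <;> fin_cases j <;> simp [e, hGf, add_assoc]
  set C := (compressionMatrix (Ring.inverse (A - z • 1)) e)⁻¹
  refine existsUnique_of_exists_of_unique ⟨(-C 0 0, -C 1 1, -C 0 1, -C 1 0), fun u v => ?_⟩ ?_
  · have hM : !![(u : ℂ) - -C 0 0, -(-C 0 1); -(-C 1 0), (v : ℂ) - -C 1 1] =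
        Matrix.diagonal (fun i => (![u, v] i : ℂ)) + C := by
      ext i j
      fin_cases i <;> fin_cases j <;> simp
    have h := hGreen u v ▸ hA.diagonal_add_inv_compressionMatrix_mul_compressionMatrix_inverse hz
      he.linearIndependent (hV u v)
    rw [hM]
    exact ⟨h, mul_eq_one_comm.1 h⟩
  · rintro ⟨α, β, τ₁, τ₂⟩ ⟨α', β', τ₁', τ₂'⟩ hp hq
    obtain ⟨⟨rfl, rfl⟩, rfl, rfl⟩ : (α = α' ∧ τ₁ = τ₁') ∧ τ₂ = τ₂' ∧ β = β' := by
      simpa using left_inv_eq_right_inv (hp 0 0).1 (hq 0 0).2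
    rfl

/-- Rank-two Schur complement formula: for a bounded self-adjoint operator
`A` on `ℓ²(G)`, distinct sites `x ≠ y` and `z` with `Im z ≠ 0`, there exist unique
`(α, β, τ₁, τ₂) ∈ ℂ⁴` such that for all real couplings `u, v`, the matrix
`[[u-α, -τ₁],[-τ₂, v-β]]` is invertible with inverse the 2×2 matrix of Green function entries
of `H_{u,v} = A + u P_x + v P_y` at the sites `x, y`. -/
theorem stmt4 {G : Type*} [Countable G] [DecidableEq G]
    (A : lp (fun _ : G => ℂ) 2 →L[ℂ] lp (fun _ : G => ℂ) 2) (hA : IsSelfAdjoint A)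
    (x y : G) (hxy : x ≠ y) (z : ℂ) (hz : z.im ≠ 0)
    (Px Py : lp (fun _ : G => ℂ) 2 →L[ℂ] lp (fun _ : G => ℂ) 2)
    (hPx : ∀ ψ, Px ψ = (inner ℂ (lp.single 2 x (1:ℂ)) ψ : ℂ) • lp.single 2 x (1:ℂ))
    (hPy : ∀ ψ, Py ψ = (inner ℂ (lp.single 2 y (1:ℂ)) ψ : ℂ) • lp.single 2 y (1:ℂ))
    (Gf : ℝ → ℝ → G → G → ℂ)
    (hGf : ∀ (u v : ℝ) (w w' : G), Gf u v w w' =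
      (inner ℂ (lp.single 2 w (1:ℂ))
        (Ring.inverse (A + (u : ℂ) • Px + (v : ℂ) • Py - z • 1) (lp.single 2 w' (1:ℂ))) : ℂ)) :
    ∃! p : ℂ × ℂ × ℂ × ℂ, ∀ u v : ℝ,
      !![(u : ℂ) - p.1, -p.2.2.1; -p.2.2.2, (v : ℂ) - p.2.1] *
          !![Gf u v x x, Gf u v x y; Gf u v y x, Gf u v y y] = 1 ∧
      !![Gf u v x x, Gf u v x y; Gf u v y x, Gf u v y y] *
          !![(u : ℂ) - p.1, -p.2.2.1; -p.2.2.2, (v : ℂ) - p.2.1] = 1 :=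
  stmt4_general A hA x y hxy z hz Px Py hPx hPy Gf hGf
end

section
/- Let α, β, τ₁, τ₂ ∈ ℂ, u, v ∈ ℝ, and t > 0. Assume: (i) u − α ≠ 0; (ii) |τ₁| ≥ t; (iii) |τ₂| ≤ |u − α|; (iv) |v − (β + τ₁τ₂/(u − α))| ≤ t; and (v) the matrix M = [[u − α, −τ₁], [−τ₂, v − β]] is invertible. Then the entries of M⁻¹ satisfy |(M⁻¹)₁₂| ≥ (1/2)|(M⁻¹)₁₁|. -/
/-!
Both entries of the first row of `M⁻¹` share the factor `(det M)⁻¹`, with cofactors `v - β` and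
`τ₁`, so it suffices that `‖v - β‖ ≤ 2‖τ₁‖`. Resonance at `x` puts `v - β` within `t ≤ ‖τ₁‖` of the
self-energy correction `τ₁τ₂/(u - α)`, and `‖τ₂‖ ≤ ‖u - α‖` bounds that correction by `‖τ₁‖`.
-/

namespace Matrix

variable {K : Type*}

theorem inv_fin_two_of_apply_zero_zero [Field K] (a b c d : K) :
    (!![a, b; c, d])⁻¹ 0 0 = (a * d - b * c)⁻¹ * d := by
  simp [inv_def, adjugate_fin_two_of, det_fin_two_of, Ring.inverse_eq_inv']

theorem inv_fin_two_of_apply_zero_one [Field K] (a b c d : K) :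
    (!![a, b; c, d])⁻¹ 0 1 = (a * d - b * c)⁻¹ * -b := by
  simp [inv_def, adjugate_fin_two_of, det_fin_two_of, Ring.inverse_eq_inv']

theorem half_norm_inv_fin_two_of_apply_zero_zero_le [NormedField K] {a b c d : K}
    (h : ‖d‖ ≤ 2 * ‖b‖) :
    1 / 2 * ‖(!![a, b; c, d])⁻¹ 0 0‖ ≤ ‖(!![a, b; c, d])⁻¹ 0 1‖ := by
  rw [inv_fin_two_of_apply_zero_zero, inv_fin_two_of_apply_zero_one, norm_mul, norm_mul,
    norm_neg]
  nlinarith [norm_nonneg (a * d - b * c)⁻¹]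

end Matrix

section SelfEnergy

variable {K : Type*} [NormedField K]

theorem norm_mul_div_le_of_norm_le {τ₁ τ₂ z : K} (h : ‖τ₂‖ ≤ ‖z‖) :
    ‖τ₁ * τ₂ / z‖ ≤ ‖τ₁‖ := by
  rw [mul_div_assoc, norm_mul, norm_div]
  exact mul_le_of_le_one_right (norm_nonneg _) (div_le_one_of_le₀ h (norm_nonneg _))

theorem norm_sub_le_two_mul_of_resonant {τ₁ τ₂ z w β : K} {t : ℝ} (hτ₁ : t ≤ ‖τ₁‖)
    (hτ₂ : ‖τ₂‖ ≤ ‖z‖) (hres : ‖w - (β + τ₁ * τ₂ / z)‖ ≤ t) :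
    ‖w - β‖ ≤ 2 * ‖τ₁‖ :=
  calc ‖w - β‖ = ‖(w - (β + τ₁ * τ₂ / z)) + τ₁ * τ₂ / z‖ := by ring_nf
    _ ≤ ‖w - (β + τ₁ * τ₂ / z)‖ + ‖τ₁ * τ₂ / z‖ := norm_add_le _ _
    _ ≤ 2 * ‖τ₁‖ := by linarith [norm_mul_div_le_of_norm_le (τ₁ := τ₁) hτ₂]

end SelfEnergy

theorem stmt6_general (α β τ₁ τ₂ : ℂ) (u v t : ℝ)
    (h2 : t ≤ ‖τ₁‖)
    (h3 : ‖τ₂‖ ≤ ‖(u : ℂ) - α‖)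
    (h4 : ‖(v : ℂ) - (β + τ₁ * τ₂ / ((u : ℂ) - α))‖ ≤ t) :
    (1 / 2) * ‖(!![(u : ℂ) - α, -τ₁; -τ₂, (v : ℂ) - β])⁻¹ 0 0‖ ≤
      ‖(!![(u : ℂ) - α, -τ₁; -τ₂, (v : ℂ) - β])⁻¹ 0 1‖ := by
  apply Matrix.half_norm_inv_fin_two_of_apply_zero_zero_le
  rw [norm_neg]
  exact norm_sub_le_two_mul_of_resonant h2 h3 h4

/-- Deterministic core of the resonant delocalization bound: under a strong
tunneling amplitude, a resonance at `x` and non-resonance at `0`, the off-diagonal entry of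
the inverse 2×2 matrix dominates half the diagonal entry. -/
theorem stmt6 (α β τ₁ τ₂ : ℂ) (u v t : ℝ) (ht : 0 < t)
    (h1 : (u : ℂ) - α ≠ 0)
    (h2 : t ≤ ‖τ₁‖)
    (h3 : ‖τ₂‖ ≤ ‖(u : ℂ) - α‖)
    (h4 : ‖(v : ℂ) - (β + τ₁ * τ₂ / ((u : ℂ) - α))‖ ≤ t)
    (h5 : IsUnit (!![(u : ℂ) - α, -τ₁; -τ₂, (v : ℂ) - β])) :
    (1 / 2) * ‖(!![(u : ℂ) - α, -τ₁; -τ₂, (v : ℂ) - β])⁻¹ 0 0‖ ≤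
      ‖(!![(u : ℂ) - α, -τ₁; -τ₂, (v : ℂ) - β])⁻¹ 0 1‖ :=
  stmt6_general α β τ₁ τ₂ u v t h2 h3 h4
end

section
/- Let U, V ∈ ℂ ∖ {0}, γ ∈ ℂ, and r ≥ 0. If |U − γ/V| ≤ r and |V − γ/U| ≤ r, then min{|U|, |V|} ≤ √|γ| + r. -/
theorem norm_div_le_sqrt_norm_of_sqrt_norm_le {𝕜 : Type*} [NormedDivisionRing 𝕜] {γ v : 𝕜}
    (hv : √‖γ‖ ≤ ‖v‖) : ‖γ / v‖ ≤ √‖γ‖ := by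
  rcases eq_or_ne v 0 with rfl | hv0
  · simp
  rw [norm_div, div_le_iff₀ (norm_pos_iff.mpr hv0)]
  calc ‖γ‖ = √‖γ‖ * √‖γ‖ := (Real.mul_self_sqrt (norm_nonneg γ)).symm
    _ ≤ √‖γ‖ * ‖v‖ := mul_le_mul_of_nonneg_left hv (Real.sqrt_nonneg _)

theorem stmt8_general (U V γ : ℂ) (r : ℝ)
    (h1 : ‖U - γ / V‖ ≤ r) :
    min ‖U‖ ‖V‖ ≤ Real.sqrt ‖γ‖ + r := by
  by_cases hV : ‖V‖ ≤ √‖γ‖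
  · have hr : 0 ≤ r := (norm_nonneg _).trans h1
    exact min_le_of_right_le (by linarith)
  · calc min ‖U‖ ‖V‖ ≤ ‖U‖ := min_le_left _ _
      _ ≤ ‖γ / V‖ + ‖U - γ / V‖ := norm_le_insert' U (γ / V)
      _ ≤ √‖γ‖ + r := add_le_add (norm_div_le_sqrt_norm_of_sqrt_norm_le (not_le.mp hV).le) h1

/-- Any simultaneous solution of the two resonance inequalities has one
coordinate of modulus at most `√|γ| + r`. -/
theorem stmt8 (U V γ : ℂ) (r : ℝ) (hr : 0 ≤ r) (hU : U ≠ 0) (hV : V ≠ 0)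
    (h1 : ‖U - γ / V‖ ≤ r) (h2 : ‖V - γ / U‖ ≤ r) :
    min ‖U‖ ‖V‖ ≤ Real.sqrt ‖γ‖ + r :=
  stmt8_general U V γ r h1
end

section
/- Let (Ω, ℬ, ℙ) be a probability space, (Ξ_n)_{n∈ℕ} a sequence of random variables with values in the open upper half-plane {z ∈ ℂ : Im z > 0} whose laws converge weakly (in distribution) to the law of a real-valued random variable X, and let V be a real-valued random variable independent of X and independent of each Ξ_n, whose distribution is absolutely continuous with density ρ ∈ L¹(ℝ). Assume there are δ > 0 and c < ∞ such that ρ(v) ≤ c · (1_ε * ρ)(v) for Lebesgue-almost every v ∈ ℝ and every ε ∈ (0, δ), where (1_ε * ρ)(v) := (1/(2ε)) ∫_{v−ε}^{v+ε} ρ(w) dw. Then for every ε ∈ (0, δ): limsup_{n→∞} 𝔼[ π⁻¹ Im( (V − Ξ_n)⁻¹ ) ] ≤ c · (1/(2ε)) · ℙ(|V − X| ≤ ε). -/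
open MeasureTheory ProbabilityTheory Filter Topology
open scoped ENNReal NNReal Real BoundedContinuousFunction

/-!
For `0 < Im z`, `π⁻¹ Im ((v - z)⁻¹)` is the density of the Cauchy law with location `Re z` and
scale `Im z`. Conditioning on `Ξₙ`, which is independent of `V`, and using `ρ ≤ g := c (1_ε * ρ)`,
the expectation in question is at most `𝔼[P g (Ξₙ)]`, where `P g z` is the mean of `g` under
that Cauchy law (the Poisson integral of `g`). Taking the scale to be `|Im z|`, the Cauchy law
degenerates to a Dirac mass on the real line, so `P g` is bounded and continuous on all of `ℂ`
with `P g x = g x` for real `x`. Weak convergence therefore gives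
`𝔼[P g (Ξₙ)] → 𝔼[g X] = c (2ε)⁻¹ ℙ(|V - X| ≤ ε)`, the last step by independence of `V` and `X`.
-/

theorem integral_cauchyMeasure_eq_integral_cauchyPDFReal_mul (x₀ : ℝ) {γ : ℝ≥0} (hγ : γ ≠ 0)
    (g : ℝ → ℝ) : ∫ v, g v ∂cauchyMeasure x₀ γ = ∫ v, cauchyPDFReal x₀ γ v * g v := by
  rw [cauchyMeasure_of_scale_ne_zero _ hγ, integral_withDensity_eq_integral_toReal_smul
    (measurable_cauchyPDF x₀ γ) (ae_of_all _ fun _ => ENNReal.ofReal_lt_top)]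
  simp [cauchyPDF, ENNReal.toReal_ofReal (cauchyPDF_pos x₀ hγ _).le]

theorem integral_cauchyMeasure_eq_integral_cauchyMeasure_zero_one (x₀ : ℝ) (γ : ℝ≥0)
    (g : ℝ → ℝ) : ∫ v, g v ∂cauchyMeasure x₀ γ = ∫ t, g (x₀ + γ * t) ∂cauchyMeasure 0 1 := by
  obtain rfl | hγ := eq_or_ne γ 0
  · simp
  have hγ' : (γ : ℝ) ≠ 0 := NNReal.coe_ne_zero.2 hγ
  set F : ℝ → ℝ := fun t => cauchyPDFReal 0 1 t * g (x₀ + γ * t)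
  have hF : ∀ v, cauchyPDFReal x₀ γ v * g v = (γ : ℝ)⁻¹ * F ((v - x₀) / γ) := by
    intro v
    simp only [F, cauchyPDFReal_def', mul_div_cancel₀ _ hγ', add_sub_cancel, NNReal.coe_inv,
      NNReal.coe_one, inv_one, mul_one, sub_zero, div_one]
    ring
  rw [integral_cauchyMeasure_eq_integral_cauchyPDFReal_mul x₀ hγ,
    integral_cauchyMeasure_eq_integral_cauchyPDFReal_mul 0 one_ne_zero]
  simp_rw [hF]
  rw [integral_const_mul, integral_sub_right_eq_self (fun v => F (v / γ)),
    Measure.integral_comp_div, NNReal.abs_eq, smul_eq_mul, inv_mul_cancel_left₀ hγ']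

noncomputable def poissonIntegral (g : ℝ → ℝ) (z : ℂ) : ℝ :=
  ∫ v, g v ∂cauchyMeasure z.re (Real.nnabs z.im)

theorem poissonIntegral_ofReal (g : ℝ → ℝ) (x : ℝ) : poissonIntegral g x = g x := by
  simp [poissonIntegral]

theorem continuous_poissonIntegral (g : ℝ →ᵇ ℝ) : Continuous (poissonIntegral g) := by
  have hg : poissonIntegral g = fun z => ∫ t, g (z.re + |z.im| * t) ∂cauchyMeasure 0 1 := by
    ext z
    rw [poissonIntegral, integral_cauchyMeasure_eq_integral_cauchyMeasure_zero_one,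
      Real.coe_nnabs]
  rw [hg]
  exact continuous_of_dominated (bound := fun _ => ‖g‖)
    (fun _ => (g.continuous.comp (by fun_prop)).aestronglyMeasurable)
    (fun _ => ae_of_all _ fun _ => g.norm_coe_le_norm _) (integrable_const _)
    (ae_of_all _ fun _ => g.continuous.comp (by fun_prop))

theorem norm_poissonIntegral_le (g : ℝ →ᵇ ℝ) (z : ℂ) : ‖poissonIntegral g z‖ ≤ ‖g‖ := by
  simpa [poissonIntegral] using
    norm_integral_le_of_norm_le_const (μ := cauchyMeasure z.re (Real.nnabs z.im))
      (ae_of_all _ g.norm_coe_le_norm)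

theorem poissonIntegral_nonneg {g : ℝ → ℝ} (hg : ∀ v, 0 ≤ g v) (z : ℂ) :
    0 ≤ poissonIntegral g z :=
  integral_nonneg hg

theorem cauchyPDFReal_re_nnabs_im {z : ℂ} (hz : 0 ≤ z.im) (v : ℝ) :
    cauchyPDFReal z.re (Real.nnabs z.im) v = π⁻¹ * (((v : ℂ) - z)⁻¹).im := by
  simp only [cauchyPDFReal_def, Real.coe_nnabs, abs_of_nonneg hz, Complex.inv_im,
    Complex.normSq_apply, Complex.sub_re, Complex.sub_im, Complex.ofReal_re, Complex.ofReal_im]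
  ring

theorem pi_inv_mul_im_inv_ofReal_sub_nonneg {z : ℂ} (hz : 0 ≤ z.im) (v : ℝ) :
    0 ≤ π⁻¹ * (((v : ℂ) - z)⁻¹).im := by
  rw [← cauchyPDFReal_re_nnabs_im hz, cauchyPDFReal_def]
  positivity

theorem ProbabilityTheory.IndepFun.lintegral_comp_eq_lintegral_lintegral {Ω α β : Type*}
    [MeasurableSpace Ω] [MeasurableSpace α] [MeasurableSpace β] {μ : Measure Ω}
    [IsFiniteMeasure μ] {X : Ω → α} {Y : Ω → β} (hXY : IndepFun X Y μ) (hX : Measurable X)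
    (hY : Measurable Y) {f : α × β → ℝ≥0∞} (hf : Measurable f) :
    ∫⁻ ω, f (X ω, Y ω) ∂μ = ∫⁻ y, ∫⁻ x, f (x, y) ∂μ.map X ∂μ.map Y := by
  rw [← lintegral_map hf (hX.prodMk hY),
    (indepFun_iff_map_prod_eq_prod_map_map hX.aemeasurable hY.aemeasurable).1 hXY,
    lintegral_prod_symm _ hf.aemeasurable]

theorem lintegral_cauchyPDFReal_withDensity_le {ρ : ℝ → ℝ} (hρ : Measurable ρ) (g : ℝ →ᵇ ℝ)
    (hg : ∀ v, 0 ≤ g v) (hρg : ∀ᵐ v, ρ v ≤ g v) (x₀ : ℝ) {γ : ℝ≥0} (hγ : γ ≠ 0) :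
    ∫⁻ v, ENNReal.ofReal (cauchyPDFReal x₀ γ v)
        ∂volume.withDensity (fun v => ENNReal.ofReal (ρ v))
      ≤ ENNReal.ofReal (∫ v, g v ∂cauchyMeasure x₀ γ) := by
  have hint : Integrable (fun v => cauchyPDFReal x₀ γ v * g v) :=
    (integrable_cauchyPDFReal x₀).mul_bdd g.continuous.aestronglyMeasurable
      (ae_of_all _ g.norm_coe_le_norm)
  rw [lintegral_withDensity_eq_lintegral_mul _ hρ.ennreal_ofReal
    (measurable_cauchyPDFReal x₀ γ).ennreal_ofReal,
    integral_cauchyMeasure_eq_integral_cauchyPDFReal_mul x₀ hγ,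
    ofReal_integral_eq_lintegral_ofReal hint
      (ae_of_all _ fun v => mul_nonneg (cauchyPDF_pos x₀ hγ v).le (hg v))]
  refine lintegral_mono_ae ?_
  filter_upwards [hρg] with v hv
  rw [Pi.mul_apply, mul_comm, ENNReal.ofReal_mul (cauchyPDF_pos x₀ hγ v).le]
  gcongr

theorem integral_pi_inv_mul_im_inv_sub_le {Ω : Type*} [MeasurableSpace Ω] {μ : Measure Ω}
    [IsProbabilityMeasure μ] {V : Ω → ℝ} {Θ : Ω → ℂ} (hVΘ : IndepFun V Θ μ)
    (hV : Measurable V) (hΘ : Measurable Θ) (hΘup : ∀ ω, 0 < (Θ ω).im) {ρ : ℝ → ℝ}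
    (hρ : Measurable ρ)
    (hρdens : μ.map V = volume.withDensity (fun v => ENNReal.ofReal (ρ v)))
    (g : ℝ →ᵇ ℝ) (hg : ∀ v, 0 ≤ g v) (hρg : ∀ᵐ v, ρ v ≤ g v) :
    ∫ ω, π⁻¹ * (((V ω : ℂ) - Θ ω)⁻¹).im ∂μ ≤ ∫ ω, poissonIntegral g (Θ ω) ∂μ := by
  have hP : Measurable fun p : ℝ × ℂ => ENNReal.ofReal (π⁻¹ * (((p.1 : ℂ) - p.2)⁻¹).im) := by
    fun_prop
  have hG : Continuous (poissonIntegral g) := continuous_poissonIntegral g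
  have hGint : Integrable (fun ω => poissonIntegral g (Θ ω)) μ :=
    .of_bound (hG.comp_aestronglyMeasurable hΘ.aestronglyMeasurable) ‖g‖
      (ae_of_all _ fun ω => norm_poissonIntegral_le g (Θ ω))
  have hup : ∀ᵐ z ∂μ.map Θ, 0 < z.im :=
    (ae_map_iff hΘ.aemeasurable (measurableSet_lt measurable_const Complex.measurable_im)).2
      (ae_of_all _ hΘup)
  have key : ∫⁻ ω, ENNReal.ofReal (π⁻¹ * (((V ω : ℂ) - Θ ω)⁻¹).im) ∂μ
      ≤ ENNReal.ofReal (∫ ω, poissonIntegral g (Θ ω) ∂μ) := by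
    calc ∫⁻ ω, ENNReal.ofReal (π⁻¹ * (((V ω : ℂ) - Θ ω)⁻¹).im) ∂μ
        = ∫⁻ z, ∫⁻ v, ENNReal.ofReal (π⁻¹ * (((v : ℂ) - z)⁻¹).im) ∂μ.map V ∂μ.map Θ :=
          hVΘ.lintegral_comp_eq_lintegral_lintegral hV hΘ hP
      _ ≤ ∫⁻ z, ENNReal.ofReal (poissonIntegral g z) ∂μ.map Θ := by
          refine lintegral_mono_ae ?_
          filter_upwards [hup] with z hz
          simp_rw [← cauchyPDFReal_re_nnabs_im hz.le, hρdens]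
          exact lintegral_cauchyPDFReal_withDensity_le hρ g hg hρg _ (by simpa using hz.ne')
      _ = ∫⁻ ω, ENNReal.ofReal (poissonIntegral g (Θ ω)) ∂μ :=
          lintegral_map hG.measurable.ennreal_ofReal hΘ
      _ = ENNReal.ofReal (∫ ω, poissonIntegral g (Θ ω) ∂μ) :=
          (ofReal_integral_eq_lintegral_ofReal hGint
            (ae_of_all _ fun ω => poissonIntegral_nonneg hg _)).symm
  rw [integral_eq_lintegral_of_nonneg_ae
    (ae_of_all _ fun ω => pi_inv_mul_im_inv_ofReal_sub_nonneg (hΘup ω).le _) (by fun_prop)]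
  exact ENNReal.toReal_le_of_le_ofReal (integral_nonneg fun ω => poissonIntegral_nonneg hg _) key

theorem continuous_intervalIntegral_sub_add {ρ : ℝ → ℝ}
    (hρ : ∀ a b, IntervalIntegrable ρ volume a b) (ε : ℝ) :
    Continuous fun v => ∫ w in (v - ε)..(v + ε), ρ w := by
  have hF := intervalIntegral.continuous_primitive hρ 0
  have h : (fun v => ∫ w in (v - ε)..(v + ε), ρ w)
      = fun v => (∫ w in 0..(v + ε), ρ w) - ∫ w in 0..(v - ε), ρ w :=
    funext fun v => (intervalIntegral.integral_interval_sub_left (hρ _ _) (hρ _ _)).symm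
  rw [h]
  fun_prop

theorem norm_intervalIntegral_le_integral {ρ : ℝ → ℝ} (hρ0 : ∀ v, 0 ≤ ρ v) (hρ : Integrable ρ)
    {a b : ℝ} (hab : a ≤ b) : ‖∫ w in a..b, ρ w‖ ≤ ∫ w, ρ w := by
  rw [Real.norm_of_nonneg (intervalIntegral.integral_nonneg hab fun w _ => hρ0 w),
    intervalIntegral.integral_of_le hab]
  exact setIntegral_le_integral hρ (ae_of_all _ hρ0)

theorem ofReal_intervalIntegral_eq_withDensity_Icc {ρ : ℝ → ℝ} (hρ0 : ∀ v, 0 ≤ ρ v)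
    (hρ : Integrable ρ) {a b : ℝ} (hab : a ≤ b) :
    ENNReal.ofReal (∫ w in a..b, ρ w)
      = volume.withDensity (fun v => ENNReal.ofReal (ρ v)) (Set.Icc a b) := by
  rw [withDensity_apply _ measurableSet_Icc, intervalIntegral.integral_of_le hab,
    ofReal_integral_eq_lintegral_ofReal hρ.integrableOn (ae_of_all _ hρ0),
    Measure.restrict_congr_set Ioc_ae_eq_Icc]

theorem integral_intervalIntegral_comp_eq_measure_abs_sub_le {Ω : Type*} [MeasurableSpace Ω]
    {μ : Measure Ω} [IsFiniteMeasure μ] {V X : Ω → ℝ} (hVX : IndepFun V X μ) (hV : Measurable V)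
    (hX : Measurable X) {ρ : ℝ → ℝ} (hρ0 : ∀ v, 0 ≤ ρ v) (hρ : Integrable ρ)
    (hρdens : μ.map V = volume.withDensity (fun v => ENNReal.ofReal (ρ v))) {ε : ℝ}
    (hε : 0 ≤ ε) :
    ∫ ω, (∫ w in (X ω - ε)..(X ω + ε), ρ w) ∂μ = (μ {ω | |V ω - X ω| ≤ ε}).toReal := by
  have hS : MeasurableSet {p : ℝ × ℝ | |p.1 - p.2| ≤ ε} :=
    measurableSet_le (by fun_prop) measurable_const
  have hslice : ∀ x, (fun v => (v, x)) ⁻¹' {p : ℝ × ℝ | |p.1 - p.2| ≤ ε}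
      = Set.Icc (x - ε) (x + ε) := by
    intro x
    ext v
    simp only [Set.mem_preimage, Set.mem_ofPred_eq, Set.mem_Icc, abs_le]
    constructor <;> rintro ⟨h₁, h₂⟩ <;> constructor <;> linarith
  have hmass : μ {ω | |V ω - X ω| ≤ ε}
      = ∫⁻ ω, μ.map V (Set.Icc (X ω - ε) (X ω + ε)) ∂μ := by
    change μ ((fun ω => (V ω, X ω)) ⁻¹' {p : ℝ × ℝ | |p.1 - p.2| ≤ ε}) = _
    rw [← Measure.map_apply (hV.prodMk hX) hS,
      (indepFun_iff_map_prod_eq_prod_map_map hV.aemeasurable hX.aemeasurable).1 hVX,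
      Measure.prod_apply_symm hS, lintegral_map (measurable_measure_prodMk_right hS) hX]
    simp_rw [hslice]
  have hcont := continuous_intervalIntegral_sub_add (fun _ _ => hρ.intervalIntegrable) ε
  rw [hmass, integral_eq_lintegral_of_nonneg_ae
    (ae_of_all _ fun ω => intervalIntegral.integral_nonneg (by linarith) fun w _ => hρ0 w)
    (hcont.comp_aestronglyMeasurable hX.aestronglyMeasurable)]
  congr 1
  refine lintegral_congr fun ω => ?_
  rw [hρdens, ofReal_intervalIntegral_eq_withDensity_Icc hρ0 hρ (by linarith)]

theorem nonneg_of_ae_le_mul_of_withDensity_ne_zero {ρ a : ℝ → ℝ} {c : ℝ}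
    (hρa : ∀ᵐ v, ρ v ≤ c * a v) (ha : ∀ v, 0 ≤ a v)
    (hρ : volume.withDensity (fun v => ENNReal.ofReal (ρ v)) ≠ 0) : 0 ≤ c := by
  by_contra! hc
  refine hρ ((withDensity_congr_ae ?_).trans withDensity_zero)
  filter_upwards [hρa] with v hv
  exact ENNReal.ofReal_eq_zero.2 (hv.trans (mul_nonpos_of_nonpos_of_nonneg hc.le (ha v)))

theorem stmt9_general {Ω : Type*} [MeasurableSpace Ω] (μ : Measure Ω) [IsProbabilityMeasure μ]
    (Ξ : ℕ → Ω → ℂ) (hΞmeas : ∀ n, Measurable (Ξ n))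
    (hΞup : ∀ n ω, 0 < (Ξ n ω).im)
    (X : Ω → ℝ) (hXmeas : Measurable X)
    (hweak : ∀ f : BoundedContinuousFunction ℂ ℝ,
      Tendsto (fun n => ∫ ω, f (Ξ n ω) ∂μ) atTop (𝓝 (∫ ω, f ((X ω : ℂ)) ∂μ)))
    (V : Ω → ℝ) (hVmeas : Measurable V)
    (hVX : IndepFun V X μ) (hVΞ : ∀ n, IndepFun V (Ξ n) μ)
    (ρ : ℝ → ℝ) (hρmeas : Measurable ρ) (hρ0 : ∀ v, 0 ≤ ρ v) (hρL1 : Integrable ρ)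
    (hρdens : μ.map V = (volume : Measure ℝ).withDensity (fun v => ENNReal.ofReal (ρ v)))
    (δ : ℝ) (c : ℝ)
    (hconv : ∀ ε ∈ Set.Ioo 0 δ, ∀ᵐ v ∂(volume : Measure ℝ),
      ρ v ≤ c * ((1 / (2 * ε)) * ∫ w in (v - ε)..(v + ε), ρ w)) :
    ∀ ε ∈ Set.Ioo 0 δ,
      limsup (fun n => ∫ ω, (Real.pi)⁻¹ * (((V ω : ℂ) - Ξ n ω)⁻¹).im ∂μ) atTop ≤
        c * ((1 / (2 * ε)) * (μ {ω | |V ω - X ω| ≤ ε}).toReal) := by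
  intro ε hε
  have hε0 : 0 < ε := hε.1
  have hmass_nonneg : ∀ v, 0 ≤ (1 / (2 * ε)) * ∫ w in (v - ε)..(v + ε), ρ w := fun v =>
    mul_nonneg (by positivity) (intervalIntegral.integral_nonneg (by linarith) fun w _ => hρ0 w)
  have hc : 0 ≤ c := nonneg_of_ae_le_mul_of_withDensity_ne_zero (hconv ε hε) hmass_nonneg
    (hρdens ▸ (μ.isProbabilityMeasure_map hVmeas.aemeasurable).ne_zero)
  let H : ℝ →ᵇ ℝ := .ofNormedAddCommGroup _
    (continuous_intervalIntegral_sub_add (fun _ _ => hρL1.intervalIntegrable) ε) _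
    fun v => norm_intervalIntegral_le_integral hρ0 hρL1 (by linarith)
  let g : ℝ →ᵇ ℝ := c • (1 / (2 * ε)) • H
  have hg : ∀ v, 0 ≤ g v := fun v => mul_nonneg hc (hmass_nonneg v)
  have hbound : ∀ n, ∫ ω, π⁻¹ * (((V ω : ℂ) - Ξ n ω)⁻¹).im ∂μ
      ≤ ∫ ω, poissonIntegral g (Ξ n ω) ∂μ := fun n =>
    integral_pi_inv_mul_im_inv_sub_le (hVΞ n) hVmeas (hΞmeas n) (hΞup n) hρmeas
      hρdens g hg (hconv ε hε)
  have hlim : Tendsto (fun n => ∫ ω, poissonIntegral g (Ξ n ω) ∂μ) atTop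
      (𝓝 (∫ ω, g (X ω) ∂μ)) := by
    simpa only [BoundedContinuousFunction.coe_ofNormedAddCommGroup, poissonIntegral_ofReal]
      using hweak (.ofNormedAddCommGroup _ (continuous_poissonIntegral g) _
        (norm_poissonIntegral_le g))
  have hX : ∫ ω, g (X ω) ∂μ = c * ((1 / (2 * ε)) * (μ {ω | |V ω - X ω| ≤ ε}).toReal) := by
    simp only [g, H, BoundedContinuousFunction.coe_smul,
      BoundedContinuousFunction.coe_ofNormedAddCommGroup, smul_eq_mul]
    rw [integral_const_mul, integral_const_mul, integral_intervalIntegral_comp_eq_measure_abs_sub_le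
      hVX hVmeas hXmeas hρ0 hρL1 hρdens hε0.le]
  calc limsup (fun n => ∫ ω, π⁻¹ * (((V ω : ℂ) - Ξ n ω)⁻¹).im ∂μ) atTop
      ≤ limsup (fun n => ∫ ω, poissonIntegral g (Ξ n ω) ∂μ) atTop :=
        limsup_le_limsup (Eventually.of_forall hbound)
          (isCoboundedUnder_le_of_le atTop fun n =>
            integral_nonneg fun ω => pi_inv_mul_im_inv_ofReal_sub_nonneg (hΞup n ω).le _)
          hlim.isBoundedUnder_le
    _ = c * ((1 / (2 * ε)) * (μ {ω | |V ω - X ω| ≤ ε}).toReal) := by rw [hlim.limsup_eq, hX]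

/-- Stochastic delta function principle: if `Ξₙ` are upper half-plane valued
random variables converging in distribution to a real random variable `X`, and `V` is a real
random variable independent of `X` and of each `Ξₙ` with absolutely continuous distribution
of density `ρ ∈ L¹` satisfying `ρ ≤ c (1_ε * ρ)` for all `ε ∈ (0,δ)`, then for each such `ε`,
`limsup_n 𝔼[π⁻¹ Im((V-Ξₙ)⁻¹)] ≤ c (2ε)⁻¹ ℙ(|V-X| ≤ ε)`. -/
theorem stmt9 {Ω : Type*} [MeasurableSpace Ω] (μ : Measure Ω) [IsProbabilityMeasure μ]
    (Ξ : ℕ → Ω → ℂ) (hΞmeas : ∀ n, Measurable (Ξ n))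
    (hΞup : ∀ n ω, 0 < (Ξ n ω).im)
    (X : Ω → ℝ) (hXmeas : Measurable X)
    (hweak : ∀ f : BoundedContinuousFunction ℂ ℝ,
      Tendsto (fun n => ∫ ω, f (Ξ n ω) ∂μ) atTop (𝓝 (∫ ω, f ((X ω : ℂ)) ∂μ)))
    (V : Ω → ℝ) (hVmeas : Measurable V)
    (hVX : IndepFun V X μ) (hVΞ : ∀ n, IndepFun V (Ξ n) μ)
    (ρ : ℝ → ℝ) (hρmeas : Measurable ρ) (hρ0 : ∀ v, 0 ≤ ρ v) (hρL1 : Integrable ρ)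
    (hρdens : μ.map V = (volume : Measure ℝ).withDensity (fun v => ENNReal.ofReal (ρ v)))
    (δ : ℝ) (hδ : 0 < δ) (c : ℝ)
    (hconv : ∀ ε ∈ Set.Ioo 0 δ, ∀ᵐ v ∂(volume : Measure ℝ),
      ρ v ≤ c * ((1 / (2 * ε)) * ∫ w in (v - ε)..(v + ε), ρ w)) :
    ∀ ε ∈ Set.Ioo 0 δ,
      limsup (fun n => ∫ ω, (Real.pi)⁻¹ * (((V ω : ℂ) - Ξ n ω)⁻¹).im ∂μ) atTop ≤
        c * ((1 / (2 * ε)) * (μ {ω | |V ω - X ω| ≤ ε}).toReal) :=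
  stmt9_general μ Ξ hΞmeas hΞup X hXmeas hweak V hVmeas hVX hVΞ ρ hρmeas hρ0 hρL1 hρdens δ c hconv
end

section
/- Let G be a countable set, H₀ a bounded self-adjoint operator on ℓ²(G), ψ ∈ ℓ²(G) a unit vector, and for v ∈ ℝ let H_v = H₀ + v P_ψ where P_ψ is the orthogonal projection onto ℂψ. Let S ⊂ ℝ be a countable set and ρ an atomless (continuous) probability measure on ℝ. Then the set {v ∈ ℝ : there exist E ∈ S and φ ∈ ℓ²(G) with φ ≠ 0, H_v φ = Eφ, and ⟨ψ, φ⟩ ≠ 0} has ρ-measure zero. -/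
open MeasureTheory

/-!
If `H₀ φ + v ⟨ψ, φ⟩ ψ = E φ` and `H₀ φ' + v' ⟨ψ, φ'⟩ ψ = E φ'` with `E` real, pairing the first
equation with `φ'`, the second with `φ`, and using the symmetry of `H₀` leaves
`v ⟨ψ, φ⟩ ⟨φ', ψ⟩ = v' ⟨ψ, φ⟩ ⟨φ', ψ⟩`. So as soon as both overlaps with `ψ` are nonzero, a fixed
energy `E` is an eigenvalue for at most one coupling `v`. The bad couplings therefore form a
countable set, which an atomless measure does not see.
-/

section RankOnePerturbation

variable {𝕜 F : Type*} [RCLike 𝕜] [NormedAddCommGroup F] [InnerProductSpace 𝕜 F]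
  {T : F →ₗ[𝕜] F}

theorem LinearMap.IsSymmetric.coupling_eq_of_rankOne_eigen (hT : T.IsSymmetric) {ψ φ φ' : F}
    {v v' e : ℝ} (hφ : T φ + (v : 𝕜) • inner 𝕜 ψ φ • ψ = (e : 𝕜) • φ)
    (hφ' : T φ' + (v' : 𝕜) • inner 𝕜 ψ φ' • ψ = (e : 𝕜) • φ')
    (hc : inner 𝕜 ψ φ ≠ 0) (hc' : inner 𝕜 ψ φ' ≠ 0) : v = v' := by
  have hTφ : T φ = (e : 𝕜) • φ - (v : 𝕜) • inner 𝕜 ψ φ • ψ := eq_sub_of_add_eq hφ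
  have hTφ' : T φ' = (e : 𝕜) • φ' - (v' : 𝕜) • inner 𝕜 ψ φ' • ψ := eq_sub_of_add_eq hφ'
  have hsymm := hT φ' φ
  rw [hTφ, hTφ'] at hsymm
  simp only [inner_sub_left, inner_sub_right, inner_smul_left, inner_smul_right,
    RCLike.conj_ofReal, ← inner_conj_symm φ' ψ] at hsymm
  have hprod : inner 𝕜 ψ φ * (starRingEnd 𝕜) (inner 𝕜 ψ φ') ≠ 0 :=
    mul_ne_zero hc ((map_ne_zero _).mpr hc')
  have hcoupling : (v : 𝕜) * (inner 𝕜 ψ φ * (starRingEnd 𝕜) (inner 𝕜 ψ φ')) =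
      (v' : 𝕜) * (inner 𝕜 ψ φ * (starRingEnd 𝕜) (inner 𝕜 ψ φ')) := by
    linear_combination hsymm
  exact_mod_cast mul_right_cancel₀ hprod hcoupling

theorem LinearMap.IsSymmetric.subsingleton_rankOne_eigen_couplings (hT : T.IsSymmetric)
    (ψ : F) (e : ℝ) :
    {v : ℝ | ∃ φ, T φ + (v : 𝕜) • inner 𝕜 ψ φ • ψ = (e : 𝕜) • φ ∧ inner 𝕜 ψ φ ≠ 0}.Subsingleton :=
  fun _ ⟨_, hφ, hc⟩ _ ⟨_, hφ', hc'⟩ => hT.coupling_eq_of_rankOne_eigen hφ hφ' hc hc'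

end RankOnePerturbation

theorem stmt11_general {G : Type*}
    (H₀ : lp (fun _ : G => ℂ) 2 →L[ℂ] lp (fun _ : G => ℂ) 2) (hH₀ : IsSelfAdjoint H₀)
    (ψ : lp (fun _ : G => ℂ) 2)
    (P : lp (fun _ : G => ℂ) 2 →L[ℂ] lp (fun _ : G => ℂ) 2)
    (hP : ∀ φ, P φ = (inner ℂ ψ φ : ℂ) • ψ)
    (S : Set ℝ) (hS : S.Countable)
    (ρ : Measure ℝ) (hρ : ∀ t : ℝ, ρ {t} = 0) :
    ρ {v : ℝ | ∃ E ∈ S, ∃ φ : lp (fun _ : G => ℂ) 2,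
      φ ≠ 0 ∧ (H₀ + (v : ℂ) • P) φ = (E : ℂ) • φ ∧ (inner ℂ ψ φ : ℂ) ≠ 0} = 0 := by
  have : NullSingletonClass ρ := ⟨hρ⟩
  have hsymm : (H₀ : lp (fun _ : G => ℂ) 2 →ₗ[ℂ] _).IsSymmetric := hH₀.isSymmetric
  have hcount := hS.biUnion fun E _ => (hsymm.subsingleton_rankOne_eigen_couplings ψ E).countable
  refine measure_mono_null ?_ (hcount.measure_zero ρ)
  rintro v ⟨E, hE, φ, -, hφ, hc⟩
  rw [add_apply, smul_apply, hP] at hφ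
  exact Set.mem_biUnion hE ⟨φ, hφ, hc⟩

/-- Spectral averaging null set: for the rank-one family `H_v = H₀ + vP_ψ`,
a countable set `S ⊂ ℝ` and an atomless probability measure `ρ` on ℝ, the set of couplings
`v` for which some `E ∈ S` is an eigenvalue of `H_v` with eigenvector not orthogonal to `ψ`
has `ρ`-measure zero. -/
theorem stmt11 {G : Type*} [Countable G]
    (H₀ : lp (fun _ : G => ℂ) 2 →L[ℂ] lp (fun _ : G => ℂ) 2) (hH₀ : IsSelfAdjoint H₀)
    (ψ : lp (fun _ : G => ℂ) 2) (hψ : ‖ψ‖ = 1)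
    (P : lp (fun _ : G => ℂ) 2 →L[ℂ] lp (fun _ : G => ℂ) 2)
    (hP : ∀ φ, P φ = (inner ℂ ψ φ : ℂ) • ψ)
    (S : Set ℝ) (hS : S.Countable)
    (ρ : Measure ℝ) [IsProbabilityMeasure ρ] (hρ : ∀ t : ℝ, ρ {t} = 0) :
    ρ {v : ℝ | ∃ E ∈ S, ∃ φ : lp (fun _ : G => ℂ) 2,
      φ ≠ 0 ∧ (H₀ + (v : ℂ) • P) φ = (E : ℂ) • φ ∧ (inner ℂ ψ φ : ℂ) ≠ 0} = 0 :=
  stmt11_general H₀ hH₀ ψ P hP S hS ρ hρ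
end

section
/- Let 𝓗 be a complex Hilbert space, H₀ a bounded self-adjoint operator on 𝓗, ψ ∈ 𝓗 a unit vector, and for v ∈ ℝ let H_v = H₀ + v P_ψ where P_ψ is the orthogonal projection onto ℂψ. Fix E ∈ ℝ. Then there is at most one value v ∈ ℝ ∖ {0} for which there exists φ ∈ 𝓗 with φ ≠ 0, H_v φ = Eφ, and ⟨ψ, φ⟩ ≠ 0. In other words, if v, v' ∈ ℝ ∖ {0} both admit eigenvectors of H_v, respectively H_{v'}, with eigenvalue E which are not orthogonal to ψ, then v = v'. -/
/-! Pair the eigenvalue equation for `H_v` with `φ'` and the one for `H_{v'}` with `φ`. Since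
`H_{v'}` is symmetric and `E` is real, the two pairings agree, so
`0 = ⟪φ', (H_v - H_{v'}) φ⟫ = (v - v') ⟪ψ, φ⟫ ⟪φ', ψ⟫`, and both inner products are nonzero. -/

open InnerProductSpace
open scoped InnerProductSpace

section

variable {𝕜 E : Type*} [RCLike 𝕜] [NormedAddCommGroup E] [InnerProductSpace 𝕜 E]

theorem LinearMap.IsSymmetric.inner_sub_apply_eq_zero {A B : E →ₗ[𝕜] E} (hB : B.IsSymmetric)
    {μ : ℝ} {x y : E} (hx : A x = (μ : 𝕜) • x) (hy : B y = (μ : 𝕜) • y) :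
    ⟪y, (A - B) x⟫_𝕜 = 0 := by
  rw [LinearMap.sub_apply, inner_sub_right, hx, ← hB, hy, inner_smul_left, inner_smul_right,
    RCLike.conj_ofReal, sub_self]

theorem eq_of_apply_add_smul_rankOne_eq_smul {A : E →L[𝕜] E} (hA : (A : E →ₗ[𝕜] E).IsSymmetric)
    (ψ : E) {s t μ : ℝ} {x y : E}
    (hx : (A + (s : 𝕜) • rankOne 𝕜 ψ ψ) x = (μ : 𝕜) • x)
    (hy : (A + (t : 𝕜) • rankOne 𝕜 ψ ψ) y = (μ : 𝕜) • y)
    (hxψ : ⟪ψ, x⟫_𝕜 ≠ 0) (hyψ : ⟪ψ, y⟫_𝕜 ≠ 0) : s = t := by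
  have hsym : ((A + (t : 𝕜) • rankOne 𝕜 ψ ψ : E →L[𝕜] E) : E →ₗ[𝕜] E).IsSymmetric := by
    push_cast
    exact hA.add ((isSymmetric_rankOne_self ψ).smul (RCLike.conj_ofReal t))
  have hdiff : ((s : 𝕜) - t) * (⟪ψ, x⟫_𝕜 * ⟪y, ψ⟫_𝕜) = 0 := by
    rw [← hsym.inner_sub_apply_eq_zero (A := ↑(A + (s : 𝕜) • rankOne 𝕜 ψ ψ)) hx hy]
    simp only [LinearMap.sub_apply, ContinuousLinearMap.coe_coe, add_apply, smul_apply,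
      rankOne_apply, add_sub_add_left_eq_sub, ← sub_smul, inner_smul_right]
  have hyψ' : ⟪y, ψ⟫_𝕜 ≠ 0 := inner_eq_zero_symm.not.mp hyψ
  exact_mod_cast sub_eq_zero.mp ((mul_eq_zero.mp hdiff).resolve_right (mul_ne_zero hxψ hyψ'))

end

theorem stmt12_general {𝓗 : Type*} [NormedAddCommGroup 𝓗] [InnerProductSpace ℂ 𝓗] [CompleteSpace 𝓗]
    (H₀ : 𝓗 →L[ℂ] 𝓗) (hH₀ : IsSelfAdjoint H₀)
    (ψ : 𝓗)
    (P : 𝓗 →L[ℂ] 𝓗) (hP : ∀ φ, P φ = (inner ℂ ψ φ : ℂ) • ψ)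
    (E : ℝ) (v v' : ℝ)
    (φ φ' : 𝓗)
    (h1 : (H₀ + (v : ℂ) • P) φ = (E : ℂ) • φ)
    (h2 : (H₀ + (v' : ℂ) • P) φ' = (E : ℂ) • φ')
    (ho : (inner ℂ ψ φ : ℂ) ≠ 0) (ho' : (inner ℂ ψ φ' : ℂ) ≠ 0) :
    v = v' := by
  obtain rfl : P = rankOne ℂ ψ ψ := ContinuousLinearMap.ext hP
  exact eq_of_apply_add_smul_rankOne_eq_smul hH₀.isSymmetric ψ h1 h2 ho ho'

/-- For the rank-one perturbation family `H_v = H₀ + v P_ψ`, at a fixed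
energy `E` there is at most one nonzero coupling `v` admitting an eigenvector with
eigenvalue `E` not orthogonal to `ψ`. -/
theorem stmt12 {𝓗 : Type*} [NormedAddCommGroup 𝓗] [InnerProductSpace ℂ 𝓗] [CompleteSpace 𝓗]
    (H₀ : 𝓗 →L[ℂ] 𝓗) (hH₀ : IsSelfAdjoint H₀)
    (ψ : 𝓗) (hψ : ‖ψ‖ = 1)
    (P : 𝓗 →L[ℂ] 𝓗) (hP : ∀ φ, P φ = (inner ℂ ψ φ : ℂ) • ψ)
    (E : ℝ) (v v' : ℝ) (hv : v ≠ 0) (hv' : v' ≠ 0)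
    (φ φ' : 𝓗) (hφ : φ ≠ 0) (hφ' : φ' ≠ 0)
    (h1 : (H₀ + (v : ℂ) • P) φ = (E : ℂ) • φ)
    (h2 : (H₀ + (v' : ℂ) • P) φ' = (E : ℂ) • φ')
    (ho : (inner ℂ ψ φ : ℂ) ≠ 0) (ho' : (inner ℂ ψ φ' : ℂ) ≠ 0) :
    v = v' :=
  stmt12_general H₀ hH₀ ψ P hP E v v' φ φ' h1 h2 ho ho'
end

section
/- Let I be a countable index set, let (Ω_i, 𝔉_i, μ_i)_{i∈I} be probability spaces, and let (Ω, μ) be the product probability space with coordinates (X_i)_{i∈I} independent. For a subset S ⊆ I let 𝔊_S denote the sub-σ-algebra of the product σ-algebra generated by the coordinates (X_i)_{i∈I∖S}, and for f ∈ L²(Ω, μ) let P_S f := 𝔼[f | 𝔊_S]. Then for every finite subset Λ ⊂ I: 𝔼[|f − P_Λ f|²] ≤ Σ_{u∈Λ} 𝔼[|f − P_{{u}} f|²]. -/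
/-!
Write `P_S` for conditioning on the σ-algebra generated by the coordinates outside `S`. For
`u ∉ S`, that σ-algebra is the one outside `insert u S` joined with the `u`-th coordinate, which
is independent of everything outside `{u}`; hence `P_S P_{u} = P_{insert u S}`. Pythagoras then
gives
`‖f - P_{insert u S} f‖² = ‖f - P_S f‖² + ‖P_S (f - P_{u} f)‖² ≤ ‖f - P_S f‖² + ‖f - P_{u} f‖²`,
and induction on `Λ` finishes the proof, starting from `P_∅ f = f`.
-/

open MeasureTheory ProbabilityTheory Filter

namespace ProbabilityTheory

section L2

variable {Ω : Type*} {m mΩ : MeasurableSpace Ω} {μ : Measure Ω} [IsFiniteMeasure μ] {f g : Ω → ℝ}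

lemma integral_sub_condExp_sq (hm : m ≤ mΩ) (hf : MemLp f 2 μ) :
    ∫ ω, (f ω - (μ[f|m]) ω) ^ 2 ∂μ = ∫ ω, f ω ^ 2 ∂μ - ∫ ω, (μ[f|m]) ω ^ 2 ∂μ :=
  calc ∫ ω, (f ω - (μ[f|m]) ω) ^ 2 ∂μ = ∫ ω, Var[f; μ | m] ω ∂μ := (integral_condExp hm).symm
    _ = ∫ ω, (μ[f ^ 2|m] - μ[f|m] ^ 2 : Ω → ℝ) ω ∂μ :=
      integral_congr_ae (condVar_ae_eq_condExp_sq_sub_sq_condExp hm hf)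
    _ = ∫ ω, f ω ^ 2 ∂μ - ∫ ω, (μ[f|m]) ω ^ 2 ∂μ := by
      rw [integral_sub' (g := μ[f|m] ^ 2) integrable_condExp (hf.condExp one_le_two).integrable_sq,
        integral_condExp hm]
      rfl

lemma integral_condExp_sq_le (hm : m ≤ mΩ) (hf : MemLp f 2 μ) :
    ∫ ω, (μ[f|m]) ω ^ 2 ∂μ ≤ ∫ ω, f ω ^ 2 ∂μ := by
  have hpyth := integral_sub_condExp_sq hm hf
  have hres : 0 ≤ ∫ ω, (f ω - (μ[f|m]) ω) ^ 2 ∂μ := integral_nonneg fun _ ↦ sq_nonneg _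
  linarith

/-- Pythagoras: `f - μ[f|m]` is orthogonal to the `m`-measurable function `μ[f|m] - g`. -/
lemma integral_sub_sq_eq_add_of_stronglyMeasurable (hm : m ≤ mΩ) (hf : MemLp f 2 μ)
    (hg : StronglyMeasurable[m] g) (hg2 : MemLp g 2 μ) :
    ∫ ω, (f ω - g ω) ^ 2 ∂μ =
      ∫ ω, (f ω - (μ[f|m]) ω) ^ 2 ∂μ + ∫ ω, ((μ[f|m]) ω - g ω) ^ 2 ∂μ := by
  have hfg : MemLp (f - g) 2 μ := hf.sub hg2
  have hcond : μ[f - g|m] =ᵐ[μ] μ[f|m] - g := by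
    have := condExp_sub (m := m) (hf.integrable one_le_two) (hg2.integrable one_le_two)
    rwa [condExp_of_stronglyMeasurable hm hg (hg2.integrable one_le_two)] at this
  have hres : ∫ ω, ((f - g) ω - (μ[f - g|m]) ω) ^ 2 ∂μ = ∫ ω, (f ω - (μ[f|m]) ω) ^ 2 ∂μ :=
    integral_congr_ae (hcond.mono fun ω hω ↦ by simp only [Pi.sub_apply, hω]; ring)
  have hproj : ∫ ω, (μ[f - g|m]) ω ^ 2 ∂μ = ∫ ω, ((μ[f|m]) ω - g ω) ^ 2 ∂μ :=
    integral_congr_ae (hcond.mono fun ω hω ↦ by simp only [Pi.sub_apply, hω])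
  have key := integral_sub_condExp_sq hm hfg
  rw [hres, hproj] at key
  simp only [Pi.sub_apply] at key
  linarith

end L2

section SupIndep

variable {Ω : Type*} {mΩ : MeasurableSpace Ω} {μ : Measure Ω} {mA mB mC : MeasurableSpace Ω}
  {h : Ω → ℝ}

lemma isPiSystem_image2_inter_measurableSet (mA mB : MeasurableSpace Ω) :
    IsPiSystem (Set.image2 (· ∩ ·) {s | MeasurableSet[mA] s} {t | MeasurableSet[mB] t}) := by
  rintro _ ⟨a, ha, b, hb, rfl⟩ _ ⟨a', ha', b', hb', rfl⟩ -
  exact ⟨a ∩ a', ha.inter ha', b ∩ b', hb.inter hb', Set.inter_inter_inter_comm a a' b b'⟩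

lemma sup_eq_generateFrom_image2_inter (mA mB : MeasurableSpace Ω) :
    mA ⊔ mB = MeasurableSpace.generateFrom
      (Set.image2 (· ∩ ·) {s | MeasurableSet[mA] s} {t | MeasurableSet[mB] t}) := by
  refine le_antisymm (sup_le ?_ ?_) (MeasurableSpace.generateFrom_le ?_)
  · exact fun a ha ↦ MeasurableSpace.measurableSet_generateFrom
      ⟨a, ha, Set.univ, MeasurableSet.univ, Set.inter_univ a⟩
  · exact fun b hb ↦ MeasurableSpace.measurableSet_generateFrom
      ⟨Set.univ, MeasurableSet.univ, b, hb, Set.univ_inter b⟩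
  · rintro _ ⟨a, ha, b, hb, rfl⟩
    exact (le_sup_left (b := mB) a ha).inter (le_sup_right (a := mA) b hb)

lemma setIntegral_inter_eq_mul_of_indep (hB : mB ≤ mΩ) (hC : mC ≤ mΩ) (hBC : Indep mB mC μ)
    (hh : StronglyMeasurable[mC] h) {a b : Set Ω} (ha : MeasurableSet[mC] a)
    (hb : MeasurableSet[mB] b) :
    ∫ ω in a ∩ b, h ω ∂μ = μ.real b * ∫ ω in a, h ω ∂μ := by
  have hX : Indep mB (MeasurableSpace.comap (a.indicator h) inferInstance) μ :=
    indep_of_indep_of_le_right hBC ((hh.indicator ha).measurable.comap_le)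
  have := hX.setIntegral_eq_mul (f := id) hB
    ((hh.indicator ha).measurable.mono hC le_rfl).aemeasurable hb aestronglyMeasurable_id
  simp only [id] at this
  rwa [setIntegral_indicator (hC a ha), integral_indicator (hC a ha), Set.inter_comm] at this

theorem condExp_sup_ae_eq_condExp_of_indep [IsFiniteMeasure μ] (hB : mB ≤ mΩ) (hC : mC ≤ mΩ)
    (hAC : mA ≤ mC) (hBC : Indep mB mC μ) (hh : StronglyMeasurable[mC] h) (hint : Integrable h μ) :
    μ[h|mA ⊔ mB] =ᵐ[μ] μ[h|mA] := by
  have hA : mA ≤ mΩ := hAC.trans hC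
  have hAB : mA ⊔ mB ≤ mΩ := sup_le hA hB
  refine (ae_eq_condExp_of_forall_setIntegral_eq hAB hint
    (fun s _ _ ↦ integrable_condExp.integrableOn) (fun s hs hμs ↦ ?_)
    (stronglyMeasurable_condExp.mono (le_sup_left : mA ≤ mA ⊔ mB)).aestronglyMeasurable).symm
  clear hμs
  induction s, hs using MeasurableSpace.induction_on_inter (sup_eq_generateFrom_image2_inter mA mB)
    (isPiSystem_image2_inter_measurableSet mA mB) with
  | empty => simp
  | basic _ hs =>
    obtain ⟨a, ha, b, hb, rfl⟩ := hs
    rw [setIntegral_inter_eq_mul_of_indep hB hC hBC (stronglyMeasurable_condExp.mono hAC)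
        (hAC a ha) hb, setIntegral_inter_eq_mul_of_indep hB hC hBC hh (hAC a ha) hb,
      setIntegral_condExp hA hint ha]
  | compl t htm ht =>
    rw [setIntegral_compl (hAB t htm) integrable_condExp, setIntegral_compl (hAB t htm) hint, ht,
      integral_condExp hA]
  | iUnion g hdisj hgm hg =>
    rw [integral_iUnion (fun i ↦ hAB _ (hgm i)) hdisj integrable_condExp.integrableOn,
      integral_iUnion (fun i ↦ hAB _ (hgm i)) hdisj hint.integrableOn]
    exact tsum_congr hg

end SupIndep

section Outside

variable {ι Ω : Type*} {mΩ : MeasurableSpace Ω} {μ : Measure Ω} (𝓕 : ι → MeasurableSpace Ω)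

/-- The σ-algebra `𝔊_S` of the paper, for a general family of factors `𝓕`. -/
abbrev sigmaOutside (S : Set ι) : MeasurableSpace Ω := ⨆ i ∈ Sᶜ, 𝓕 i

variable {𝓕}

lemma sigmaOutside_le (h_le : ∀ i, 𝓕 i ≤ mΩ) (S : Set ι) : sigmaOutside 𝓕 S ≤ mΩ :=
  iSup₂_le fun i _ ↦ h_le i

lemma sigmaOutside_anti {S T : Set ι} (hST : S ⊆ T) : sigmaOutside 𝓕 T ≤ sigmaOutside 𝓕 S :=
  biSup_mono fun _ hiT hiS ↦ hiT (hST hiS)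

lemma sigmaOutside_empty : sigmaOutside 𝓕 ∅ = ⨆ i, 𝓕 i := by
  simp [sigmaOutside]

lemma sigmaOutside_eq_sup_of_notMem {S : Set ι} {u : ι} (hu : u ∉ S) :
    sigmaOutside 𝓕 S = sigmaOutside 𝓕 (insert u S) ⊔ 𝓕 u := by
  have hcompl : (insert u S)ᶜ ∪ {u} = Sᶜ := by
    ext x
    by_cases hx : x = u <;> simp_all
  rw [sigmaOutside, sigmaOutside, ← hcompl, iSup_union, iSup_singleton]

lemma indep_sigmaOutside_singleton (h_le : ∀ i, 𝓕 i ≤ mΩ) (h_indep : iIndep 𝓕 μ) (u : ι) :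
    Indep (𝓕 u) (sigmaOutside 𝓕 {u}) μ := by
  simpa [sigmaOutside] using
    indep_iSup_of_disjoint h_le h_indep (disjoint_compl_right (a := ({u} : Set ι)))

variable [IsProbabilityMeasure μ] {f : Ω → ℝ}

lemma condExp_condExp_sigmaOutside_singleton (h_le : ∀ i, 𝓕 i ≤ mΩ) (h_indep : iIndep 𝓕 μ)
    {S : Set ι} {u : ι} (hu : u ∉ S) :
    μ[μ[f|sigmaOutside 𝓕 {u}]|sigmaOutside 𝓕 S] =ᵐ[μ] μ[f|sigmaOutside 𝓕 (insert u S)] := by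
  have hle : sigmaOutside 𝓕 (insert u S) ≤ sigmaOutside 𝓕 {u} :=
    sigmaOutside_anti (Set.singleton_subset_iff.2 (Set.mem_insert u S))
  rw [sigmaOutside_eq_sup_of_notMem hu]
  exact (condExp_sup_ae_eq_condExp_of_indep (h_le u) (sigmaOutside_le h_le {u}) hle
    (indep_sigmaOutside_singleton h_le h_indep u) stronglyMeasurable_condExp
    integrable_condExp).trans (condExp_condExp_of_le hle (sigmaOutside_le h_le {u}))

lemma integral_sub_condExp_sigmaOutside_insert_sq_le (h_le : ∀ i, 𝓕 i ≤ mΩ)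
    (h_indep : iIndep 𝓕 μ) (hf : MemLp f 2 μ) {S : Set ι} {u : ι} (hu : u ∉ S) :
    ∫ ω, (f ω - (μ[f|sigmaOutside 𝓕 (insert u S)]) ω) ^ 2 ∂μ ≤
      ∫ ω, (f ω - (μ[f|sigmaOutside 𝓕 S]) ω) ^ 2 ∂μ +
        ∫ ω, (f ω - (μ[f|sigmaOutside 𝓕 {u}]) ω) ^ 2 ∂μ := by
  have hle : sigmaOutside 𝓕 (insert u S) ≤ sigmaOutside 𝓕 S :=
    sigmaOutside_anti (Set.subset_insert u S)
  have hdiff : μ[f - μ[f|sigmaOutside 𝓕 {u}]|sigmaOutside 𝓕 S] =ᵐ[μ]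
      μ[f|sigmaOutside 𝓕 S] - μ[f|sigmaOutside 𝓕 (insert u S)] :=
    (condExp_sub (hf.integrable one_le_two) integrable_condExp _).trans
      (EventuallyEq.rfl.sub (condExp_condExp_sigmaOutside_singleton h_le h_indep hu))
  calc ∫ ω, (f ω - (μ[f|sigmaOutside 𝓕 (insert u S)]) ω) ^ 2 ∂μ
      = ∫ ω, (f ω - (μ[f|sigmaOutside 𝓕 S]) ω) ^ 2 ∂μ +
          ∫ ω, ((μ[f|sigmaOutside 𝓕 S]) ω - (μ[f|sigmaOutside 𝓕 (insert u S)]) ω) ^ 2 ∂μ :=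
        integral_sub_sq_eq_add_of_stronglyMeasurable (sigmaOutside_le h_le S) hf
          (stronglyMeasurable_condExp.mono hle) (hf.condExp one_le_two)
    _ = ∫ ω, (f ω - (μ[f|sigmaOutside 𝓕 S]) ω) ^ 2 ∂μ +
          ∫ ω, (μ[f - μ[f|sigmaOutside 𝓕 {u}]|sigmaOutside 𝓕 S]) ω ^ 2 ∂μ := by
        congr 1
        exact integral_congr_ae (hdiff.mono fun ω hω ↦ by simp only [hω, Pi.sub_apply])
    _ ≤ _ := add_le_add le_rfl
        (integral_condExp_sq_le (sigmaOutside_le h_le S) (hf.sub (hf.condExp one_le_two)))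

theorem integral_sub_condExp_sigmaOutside_sq_le_sum (h_gen : ⨆ i, 𝓕 i = mΩ)
    (h_indep : iIndep 𝓕 μ) (hf : MemLp f 2 μ) (Λ : Finset ι) :
    ∫ ω, (f ω - (μ[f|sigmaOutside 𝓕 Λ]) ω) ^ 2 ∂μ ≤
      ∑ u ∈ Λ, ∫ ω, (f ω - (μ[f|sigmaOutside 𝓕 {u}]) ω) ^ 2 ∂μ := by
  classical
  have h_le : ∀ i, 𝓕 i ≤ mΩ := fun i ↦ h_gen ▸ le_iSup 𝓕 i
  induction Λ using Finset.induction_on with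
  | empty =>
    have hself : μ[f|sigmaOutside 𝓕 ↑(∅ : Finset ι)] =ᵐ[μ] f := by
      rw [Finset.coe_empty, sigmaOutside_empty, h_gen]
      exact condExp_of_aestronglyMeasurable' le_rfl hf.1 (hf.integrable one_le_two)
    have hzero : (fun ω ↦ (f ω - (μ[f|sigmaOutside 𝓕 ↑(∅ : Finset ι)]) ω) ^ 2) =ᵐ[μ] 0 :=
      hself.mono fun ω hω ↦ by simp only [hω, sub_self, Pi.zero_apply]; ring
    rw [integral_congr_ae hzero, Finset.sum_empty, integral_zero']
  | insert u Λ hu ih =>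
    rw [Finset.sum_insert hu, Finset.coe_insert, add_comm]
    exact (integral_sub_condExp_sigmaOutside_insert_sq_le h_le h_indep hf hu).trans
      (add_le_add_left ih _)

end Outside

lemma iIndepFun_eval_of_measure_cylinder {ι : Type*} {Ωi : ι → Type*}
    [∀ i, MeasurableSpace (Ωi i)] {μi : ∀ i, Measure (Ωi i)} {μ : Measure (∀ i, Ωi i)}
    (hμ : ∀ (s : Finset ι) (A : ∀ i, Set (Ωi i)), (∀ i ∈ s, MeasurableSet (A i)) →
      μ {ω | ∀ i ∈ s, ω i ∈ A i} = ∏ i ∈ s, μi i (A i)) :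
    iIndepFun (fun i ω ↦ ω i) μ := by
  have hcyl : ∀ (s : Finset ι) (A : ∀ i, Set (Ωi i)), (∀ i ∈ s, MeasurableSet (A i)) →
      μ (⋂ i ∈ s, (fun ω ↦ ω i) ⁻¹' A i) = ∏ i ∈ s, μi i (A i) := fun s A hA ↦ by
    rw [← hμ s A hA]
    congr 1
    ext
    simp
  rw [iIndepFun_iff_measure_inter_preimage_eq_mul]
  intro s A hA
  rw [hcyl s A hA]
  refine Finset.prod_congr rfl fun i hi ↦ ?_
  simpa using (hcyl {i} A (by simpa using hA i hi)).symm

end ProbabilityTheory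

theorem stmt19_general {ι : Type*} (Ωi : ι → Type*) [∀ i, MeasurableSpace (Ωi i)]
    (μi : ∀ i, Measure (Ωi i))
    (μ : Measure (∀ i, Ωi i)) [IsProbabilityMeasure μ]
    (hμ : ∀ (s : Finset ι) (A : ∀ i, Set (Ωi i)), (∀ i ∈ s, MeasurableSet (A i)) →
      μ {ω | ∀ i ∈ s, ω i ∈ A i} = ∏ i ∈ s, μi i (A i))
    (m : Set ι → MeasurableSpace (∀ i, Ωi i))
    (hm : ∀ S : Set ι, m S =
      ⨆ i ∈ Sᶜ, MeasurableSpace.comap (fun ω => ω i) inferInstance)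
    (f : (∀ i, Ωi i) → ℝ) (hf : MemLp f 2 μ)
    (Λ : Finset ι) :
    ∫ ω, |f ω - (μ[f|m ↑Λ]) ω| ^ 2 ∂μ ≤
      ∑ u ∈ Λ, ∫ ω, |f ω - (μ[f|m ({u} : Set ι)]) ω| ^ 2 ∂μ := by
  obtain rfl : m = sigmaOutside fun i ↦
      MeasurableSpace.comap (fun ω : ∀ i, Ωi i ↦ ω i) inferInstance := funext hm
  simp only [sq_abs]
  exact integral_sub_condExp_sigmaOutside_sq_le_sum rfl
    ((iIndepFun_iff_iIndep _ _ _).1 (iIndepFun_eval_of_measure_cylinder hμ)) hf Λ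

/-- Orthogonality (Efron–Stein type) bound for conditional expectations on
a countable product probability space: with `𝔊_S` the σ-algebra generated by the coordinates
outside `S` and `P_S f = 𝔼[f | 𝔊_S]`, for every finite `Λ`,
`𝔼[|f - P_Λ f|²] ≤ ∑_{u∈Λ} 𝔼[|f - P_{u} f|²]`. -/
theorem stmt19 {ι : Type*} [Countable ι] (Ωi : ι → Type*) [∀ i, MeasurableSpace (Ωi i)]
    (μi : ∀ i, Measure (Ωi i)) [∀ i, IsProbabilityMeasure (μi i)]
    (μ : Measure (∀ i, Ωi i)) [IsProbabilityMeasure μ]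
    (hμ : ∀ (s : Finset ι) (A : ∀ i, Set (Ωi i)), (∀ i ∈ s, MeasurableSet (A i)) →
      μ {ω | ∀ i ∈ s, ω i ∈ A i} = ∏ i ∈ s, μi i (A i))
    (m : Set ι → MeasurableSpace (∀ i, Ωi i))
    (hm : ∀ S : Set ι, m S =
      ⨆ i ∈ Sᶜ, MeasurableSpace.comap (fun ω => ω i) inferInstance)
    (f : (∀ i, Ωi i) → ℝ) (hf : MemLp f 2 μ)
    (Λ : Finset ι) :
    ∫ ω, |f ω - (μ[f|m ↑Λ]) ω| ^ 2 ∂μ ≤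
      ∑ u ∈ Λ, ∫ ω, |f ω - (μ[f|m ({u} : Set ι)]) ω| ^ 2 ∂μ :=
  stmt19_general Ωi μi μ hμ m hm f hf Λ
end
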